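/- Let d ≥ 2 be an integer, θ_c = (√d − 1)², and Λ(θ) = log[((d+1−θ)/2)·(1 − √(1 − 4d/(d+1−θ)²))] for θ ∈ (−∞, θ_c]. Then for every α ∈ (0,∞) the Legendre transform L(α) = sup_{θ ≤ θ_c} [αθ − Λ(θ)] is finite, and lim_{α→∞} L(α)/α = θ_c. -/

import Mathlib

open Real Filter Topology

/-- The cumulant generating function `Λ(θ) = log[((d+1−θ)/2)·(1 − √(1 − 4d/(d+1−θ)²))]`. -/
noncomputable def Lam (d : ℕ) (θ : ℝ) : ℝ :=
  Real.log ((((d : ℝ) + 1 - θ) / 2) *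
    (1 - Real.sqrt (1 - 4 * (d : ℝ) / ((d : ℝ) + 1 - θ) ^ 2)))

/-- The Legendre transform `L(α) = sup_{θ ≤ θ_c} [αθ − Λ(θ)]`, with `θ_c = (√d − 1)²`. -/
noncomputable def Leg (d : ℕ) (α : ℝ) : ℝ :=
  sSup {x | ∃ θ : ℝ, θ ≤ (Real.sqrt d - 1) ^ 2 ∧ x = α * θ - Lam d θ}

lemma sqrt_d_ge_one (d : ℕ) (hd : 2 ≤ d) : (1 : ℝ) ≤ Real.sqrt d := by
  have : (1 : ℝ) ≤ (d : ℝ) := by exact_mod_cast Nat.one_le_of_lt hd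
  nlinarith [Real.sq_sqrt (by linarith : (0:ℝ) ≤ (d:ℝ)), Real.sqrt_nonneg (d:ℝ)]

lemma x_lb (d : ℕ) (hd : 2 ≤ d) {θ : ℝ} (hθ : θ ≤ (Real.sqrt d - 1) ^ 2) :
    2 * Real.sqrt d ≤ (d : ℝ) + 1 - θ := by
  have hd0 : (0:ℝ) ≤ (d:ℝ) := by positivity
  have hsq : Real.sqrt d ^ 2 = (d : ℝ) := Real.sq_sqrt hd0
  nlinarith [hθ, hsq]

lemma lam_lb (d : ℕ) (hd : 2 ≤ d) {θ : ℝ} (hθ : θ ≤ (Real.sqrt d - 1) ^ 2) :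
    Real.log d - Real.log ((d : ℝ) + 1 - θ) ≤ Lam d θ := by
  have hd2 : (2:ℝ) ≤ (d:ℝ) := by exact_mod_cast hd
  have hd0 : (0:ℝ) < (d:ℝ) := by linarith
  have hs1 : (1:ℝ) ≤ Real.sqrt d := sqrt_d_ge_one d hd
  set x : ℝ := (d : ℝ) + 1 - θ with hxdef
  have hx : 2 * Real.sqrt d ≤ x := x_lb d hd hθ
  have hx0 : (0:ℝ) < x := by nlinarith
  have hsq : Real.sqrt d ^ 2 = (d : ℝ) := Real.sq_sqrt hd0.le
  have hx2 : 4 * (d:ℝ) ≤ x ^ 2 := by nlinarith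
  have hu : 0 ≤ 1 - 4 * (d:ℝ) / x ^ 2 := by
    rw [sub_nonneg, div_le_one (by positivity)]; exact hx2
  set s : ℝ := Real.sqrt (1 - 4 * (d:ℝ) / x ^ 2) with hsdef
  have hs0 : 0 ≤ s := Real.sqrt_nonneg _
  have hss : s ^ 2 = 1 - 4 * (d:ℝ) / x ^ 2 := Real.sq_sqrt hu
  have hss' : s ^ 2 * x ^ 2 = x ^ 2 - 4 * (d:ℝ) := by
    rw [hss]; field_simp
  have key : (d:ℝ) / x ≤ (x / 2) * (1 - s) := by
    rw [div_le_iff₀ hx0]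
    have h4 : 0 < x ^ 2 - 2 * (d:ℝ) + s * x ^ 2 := by
      nlinarith [mul_nonneg hs0 (sq_nonneg x)]
    have h5 : (x ^ 2 - 2 * (d:ℝ) - s * x ^ 2) * (x ^ 2 - 2 * (d:ℝ) + s * x ^ 2)
        = 4 * (d:ℝ) ^ 2 := by
      linear_combination (-(x ^ 2)) * hss'
    have h6 : 0 ≤ x ^ 2 - 2 * (d:ℝ) - s * x ^ 2 := by
      nlinarith [h5, h4, hd0]
    have heq : x / 2 * (1 - s) * x = x ^ 2 / 2 - s * x ^ 2 / 2 := by ring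
    rw [heq]
    clear_value x s
    linarith [h6]
  calc Real.log d - Real.log x = Real.log ((d:ℝ) / x) :=
        (Real.log_div (ne_of_gt hd0) (ne_of_gt hx0)).symm
    _ ≤ Real.log ((x / 2) * (1 - s)) := Real.log_le_log (by positivity) key
    _ = Lam d θ := rfl

theorem stmt16 (d : ℕ) (hd : 2 ≤ d) :
    (∀ α : ℝ, 0 < α →
      BddAbove {x | ∃ θ : ℝ, θ ≤ (Real.sqrt d - 1) ^ 2 ∧ x = α * θ - Lam d θ}) ∧
    Tendsto (fun α : ℝ => Leg d α / α) atTop (𝓝 ((Real.sqrt d - 1) ^ 2)) := by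
  have hd2 : (2:ℝ) ≤ (d:ℝ) := by exact_mod_cast hd
  have hd0 : (0:ℝ) < (d:ℝ) := by linarith
  have hs1 : (1:ℝ) ≤ Real.sqrt d := sqrt_d_ge_one d hd
  have hsq : Real.sqrt d ^ 2 = (d : ℝ) := Real.sq_sqrt hd0.le
  set c : ℝ := (Real.sqrt d - 1) ^ 2 with hcdef
  -- Part 1: boundedness
  have bdd : ∀ α : ℝ, 0 < α →
      BddAbove {x | ∃ θ : ℝ, θ ≤ (Real.sqrt d - 1) ^ 2 ∧ x = α * θ - Lam d θ} := by
    intro α hα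
    refine ⟨α * ((d:ℝ) + 1) - 1 - Real.log α - Real.log d, ?_⟩
    rintro z ⟨θ, hθ, rfl⟩
    have hk := lam_lb d hd hθ
    have hx : 2 * Real.sqrt d ≤ (d:ℝ) + 1 - θ := x_lb d hd hθ
    have hx0 : (0:ℝ) < (d:ℝ) + 1 - θ := by nlinarith
    have h1 : Real.log (α * ((d:ℝ) + 1 - θ)) ≤ α * ((d:ℝ) + 1 - θ) - 1 :=
      Real.log_le_sub_one_of_pos (by positivity)
    rw [Real.log_mul (ne_of_gt hα) (ne_of_gt hx0)] at h1
    have hxe : α * ((d:ℝ) + 1 - θ) = α * ((d:ℝ) + 1) - α * θ := by ring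
    rw [hxe] at h1
    linarith
  refine ⟨bdd, ?_⟩
  have hs2 : (0:ℝ) < 2 * Real.sqrt d := by linarith
  set C : ℝ := Real.log (2 * Real.sqrt d) - Real.log d with hCdef
  -- upper bound on Leg for large α
  have hub : ∀ α : ℝ, 1 / (2 * Real.sqrt d) ≤ α → Leg d α ≤ α * c + C := by
    intro α hα
    have hα0 : 0 < α := lt_of_lt_of_le (by positivity) hα
    have hne : (α * c - Lam d c) ∈
        {x | ∃ θ : ℝ, θ ≤ (Real.sqrt d - 1) ^ 2 ∧ x = α * θ - Lam d θ} := ⟨c, le_rfl, rfl⟩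
    apply csSup_le ⟨_, hne⟩
    rintro z ⟨θ, hθ, rfl⟩
    have hk := lam_lb d hd hθ
    have hx : 2 * Real.sqrt d ≤ (d:ℝ) + 1 - θ := x_lb d hd hθ
    have hx0 : (0:ℝ) < (d:ℝ) + 1 - θ := by nlinarith
    have hcθ : 0 ≤ c - θ := by nlinarith [hθ]
    have h1 : Real.log (((d:ℝ) + 1 - θ) / (2 * Real.sqrt d)) ≤
        ((d:ℝ) + 1 - θ) / (2 * Real.sqrt d) - 1 :=
      Real.log_le_sub_one_of_pos (by positivity)
    rw [Real.log_div (ne_of_gt hx0) (ne_of_gt hs2)] at h1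
    have h2 : ((d:ℝ) + 1 - θ) / (2 * Real.sqrt d) - 1 = (c - θ) * (1 / (2 * Real.sqrt d)) := by
      rw [hcdef]; field_simp; nlinarith [hsq]
    rw [h2] at h1
    have h3 : (c - θ) * (1 / (2 * Real.sqrt d)) ≤ (c - θ) * α :=
      mul_le_mul_of_nonneg_left hα hcθ
    nlinarith [hk, h1, h3]
  -- lower bound on Leg
  have hlb : ∀ α : ℝ, 0 < α → α * c - Lam d c ≤ Leg d α := by
    intro α hα
    exact le_csSup (bdd α hα) ⟨c, le_rfl, rfl⟩
  -- squeeze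
  have hg : Tendsto (fun α : ℝ => c - Lam d c / α) atTop (𝓝 c) := by
    have := (tendsto_const_nhds (x := Lam d c) (f := atTop (α := ℝ))).div_atTop tendsto_id
    simpa using tendsto_const_nhds.sub this
  have hh : Tendsto (fun α : ℝ => c + C / α) atTop (𝓝 c) := by
    have := (tendsto_const_nhds (x := C) (f := atTop (α := ℝ))).div_atTop tendsto_id
    simpa using tendsto_const_nhds.add this
  refine tendsto_of_tendsto_of_tendsto_of_le_of_le' hg hh ?_ ?_
  · filter_upwards [eventually_gt_atTop 0] with α hα0
    rw [le_div_iff₀ hα0]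
    have : (c - Lam d c / α) * α = α * c - Lam d c := by field_simp
    rw [this]
    exact hlb α hα0
  · filter_upwards [eventually_ge_atTop (1 / (2 * Real.sqrt d))] with α hα
    have hα0 : 0 < α := lt_of_lt_of_le (by positivity) hα
    rw [div_le_iff₀ hα0]
    have : (c + C / α) * α = α * c + C := by field_simp
    rw [this]
    exact hub α hα
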